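/- Let (P₀, Q₀) and (P, Q) be pairs of orthogonal projections on H, both in generic position, with P₀ - Q₀ = P - Q = A. Let V₀ and V be the Davis symmetries of (P₀, Q₀) and (P, Q) respectively (the symmetry commuting with the sum minus 1 that makes the product positive). If ‖V - V₀‖ < 2, then there exists a unique Z ∈ B(H) with Z* = -Z, ‖Z‖ < π/2, ZA = AZ, ZV₀ = -V₀Z, such that exp(Z) P₀ exp(-Z) = P and exp(Z) Q₀ exp(-Z) = Q. -/

import Mathlib

open ContinuousLinearMap

variable {H : Type*} [NormedAddCommGroup H] [InnerProductSpace ℂ H] [CompleteSpace H]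

/-- An orthogonal projection: a selfadjoint idempotent bounded operator. -/
def IsOrthogonalProjection (P : H →L[ℂ] H) : Prop :=
  IsSelfAdjoint P ∧ P * P = P

/-- A symmetry: a selfadjoint unitary operator. -/
def IsSymmetry (V : H →L[ℂ] H) : Prop :=
  IsSelfAdjoint V ∧ V * V = 1

/-- Two orthogonal projections are in generic position if the four canonical
intersections of their ranges and kernels are trivial. -/
def GenericPosition (P Q : H →L[ℂ] H) : Prop :=
  LinearMap.range (P : H →ₗ[ℂ] H) ⊓ LinearMap.range (Q : H →ₗ[ℂ] H) = ⊥ ∧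
  LinearMap.range (P : H →ₗ[ℂ] H) ⊓ LinearMap.ker (Q : H →ₗ[ℂ] H) = ⊥ ∧
  LinearMap.ker (P : H →ₗ[ℂ] H) ⊓ LinearMap.range (Q : H →ₗ[ℂ] H) = ⊥ ∧
  LinearMap.ker (P : H →ₗ[ℂ] H) ⊓ LinearMap.ker (Q : H →ₗ[ℂ] H) = ⊥

/-! Write `A = P₀ - Q₀`, `B₀ = P₀ + Q₀ - 1` and `B = P + Q - 1`. The projection identities give
`B₀² = B² = 1 - A²`, with `A` anticommuting with `B₀` and `B`, so the Davis symmetries satisfy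
`V₀ B₀ = V B = T := √(1 - A²)`. Genericity makes `B₀`, `B` and `T` injective selfadjoint operators,
hence right-cancellable; cancelling them shows that `V₀` and `V` anticommute with `A`. Thus
`W = V V₀` is a unitary commuting with `A` with `‖W - 1‖ = ‖V - V₀‖ < 2`, so it has a principal
logarithm `2Z`: skew, of norm `< π`, commuting with `A`, and anticommuting with `V₀` because
`V₀ W V₀ = W⋆`. For `Y` commuting with `A` and anticommuting with `V₀` one computes
`exp Y B₀ exp (-Y) = exp (2Y) V₀ T`, so conjugation by `exp Y` carries `(P₀, Q₀)` to `(P, Q)`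
exactly when `exp (2Y) = W`; since `exp` is injective on skew elements of norm `< π`, this
pins down `Z`. -/

open NormedSpace

section Ring

variable {R : Type*} [Ring R]

theorem IsIdempotentElem.add_sub_one_mul_self {p q : R} (hp : IsIdempotentElem p)
    (hq : IsIdempotentElem q) : (p + q - 1) * (p + q - 1) = 1 - (p - q) * (p - q) := by
  simp only [mul_sub, sub_mul, mul_add, add_mul, mul_one, one_mul, hp.eq, hq.eq]
  abel

theorem IsIdempotentElem.sub_mul_add_sub_one {p q : R} (hp : IsIdempotentElem p)
    (hq : IsIdempotentElem q) : (p - q) * (p + q - 1) = -((p + q - 1) * (p - q)) := by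
  simp only [mul_sub, sub_mul, mul_add, add_mul, mul_one, one_mul, hp.eq, hq.eq]
  abel

theorem commute_mul_of_anticommute {a u v : R} (hu : a * u = -(u * a)) (hv : a * v = -(v * a)) :
    Commute a (u * v) := by
  rw [Commute, SemiconjBy, ← mul_assoc, hu, neg_mul, mul_assoc, hv, mul_neg, neg_neg, mul_assoc]

theorem mul_eq_neg_mul_of_commute_mul {a v b : R} (hb : IsRightRegular b)
    (hab : a * b = -(b * a)) (h : Commute a (v * b)) : a * v = -(v * a) := by
  have hba : b * a = -(a * b) := by rw [hab, neg_neg]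
  apply hb
  change a * v * b = -(v * a) * b
  rw [mul_assoc, h.eq, mul_assoc, hba, mul_neg, neg_mul, mul_assoc]

theorem conj_eq_and_conj_eq_iff (𝕜 : Type*) [Field 𝕜] [CharZero 𝕜] [Algebra 𝕜 R]
    {u u' p₀ q₀ p q : R} (hu : u * u' = 1) (hc : Commute u (p₀ - q₀)) (hdiff : p₀ - q₀ = p - q) :
    u * p₀ * u' = p ∧ u * q₀ * u' = q ↔ u * (p₀ + q₀ - 1) * u' = p + q - 1 := by
  have hA : u * (p₀ - q₀) * u' = p - q := by rw [hc.eq, mul_assoc, hu, mul_one, hdiff]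
  constructor
  · rintro ⟨hp, hq⟩
    simp only [mul_sub, mul_add, sub_mul, add_mul, mul_one, hu, hp, hq]
  intro h
  have half : ∀ x y : R, x + x = y + y → x = y := fun x y hxy => by
    simpa [← two_smul 𝕜, smul_smul] using congrArg ((2 : 𝕜)⁻¹ • ·) hxy
  constructor
  · refine half _ _ ?_
    calc u * p₀ * u' + u * p₀ * u'
        = u * (p₀ + q₀ - 1) * u' + u * (p₀ - q₀) * u' + u * u' := by noncomm_ring
      _ = p + p := by rw [h, hA, hu]; abel
  · refine half _ _ ?_
    calc u * q₀ * u' + u * q₀ * u'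
        = u * (p₀ + q₀ - 1) * u' - u * (p₀ - q₀) * u' + u * u' := by noncomm_ring
      _ = q + q := by rw [h, hA, hu]; abel

theorem IsSelfAdjoint.mem_unitary_of_mul_self_eq_one {R : Type*} [Monoid R] [StarMul R] {s : R}
    (hs : IsSelfAdjoint s) (hss : s * s = 1) : s ∈ unitary R := by
  rw [Unitary.mem_iff, hs.star_eq, hss, and_self]

end Ring

section Exponential

variable {𝔸 : Type*} [NormedRing 𝔸] [NormedAlgebra ℚ 𝔸] [CompleteSpace 𝔸]

theorem NormedSpace.exp_mul_exp_neg (y : 𝔸) : exp y * exp (-y) = 1 := by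
  rw [← exp_add_of_commute (Commute.refl y).neg_right, add_neg_cancel, exp_zero]

theorem exp_mul_mul_exp_neg_eq_iff {y s t v : 𝔸} (hs : s * s = 1) (ht : IsRightRegular t)
    (hyt : Commute y t) (hys : y * s = -(s * y)) :
    exp y * (s * t) * exp (-y) = v * t ↔ exp (y + y) = v * s := by
  have hsy : s * exp (-y) = exp y * s :=
    (show SemiconjBy s (-y) y by rw [SemiconjBy, mul_neg, hys]).exp_right
  have hty : t * exp (-y) = exp (-y) * t := hyt.neg_left.exp_left.eq.symm
  have hconj : exp y * (s * t) * exp (-y) = exp (y + y) * s * t := by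
    rw [mul_assoc, mul_assoc, hty, ← mul_assoc s, hsy, exp_add_of_commute (Commute.refl y)]
    simp only [mul_assoc]
  rw [hconj, ht.eq_iff]
  exact ⟨fun h => by rw [← h, mul_assoc, hs, mul_one], fun h => by rw [h, mul_assoc, hs, mul_one]⟩

end Exponential

section CStarAlgebra

variable {𝒜 : Type*} [CStarAlgebra 𝒜]

open Unitary selfAdjoint

theorem exists_mem_skewAdjoint_exp_eq {u : 𝒜} (hu : u ∈ unitary 𝒜) (h : ‖u - 1‖ < 2) :
    ∃ y ∈ skewAdjoint 𝒜, ‖y‖ < Real.pi ∧ exp y = u ∧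
      ∀ a, Commute u a → Commute (star u) a → Commute y a := by
  set x := argSelfAdjoint ⟨u, hu⟩
  refine ⟨Complex.I • (x : 𝒜), x.2.smul_mem_skewAdjoint Complex.conj_I, ?_, ?_, ?_⟩
  · have hx : ‖x‖ = Real.arccos (1 - ‖u - 1‖ ^ 2 / 2) := norm_argSelfAdjoint (u := ⟨u, hu⟩) h
    rw [norm_smul, Complex.norm_I, one_mul]
    change ‖x‖ < Real.pi
    rw [hx, Real.arccos_lt_pi]
    nlinarith [norm_nonneg (u - 1)]
  · exact congrArg Subtype.val (expUnitary_argSelfAdjoint (u := ⟨u, hu⟩) h)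
  · intro a hua hua'
    exact (hua.cfc hua' _).smul_left Complex.I

theorem eq_of_exp_eq_of_mem_skewAdjoint {y₁ y₂ : 𝒜} (h₁ : y₁ ∈ skewAdjoint 𝒜)
    (h₂ : y₂ ∈ skewAdjoint 𝒜) (hn₁ : ‖y₁‖ < Real.pi) (hn₂ : ‖y₂‖ < Real.pi)
    (h : exp y₁ = exp y₂) : y₁ = y₂ := by
  have hlog : ∀ y (hy : y ∈ skewAdjoint 𝒜), ‖y‖ < Real.pi →
      Complex.I • (argSelfAdjoint (expUnitary (skewAdjoint.negISMul ⟨y, hy⟩)) : 𝒜) = y := by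
    intro y hy hn
    rw [argSelfAdjoint_expUnitary (by simpa [norm_smul] using hn)]
    exact skewAdjoint.I_smul_neg_I ⟨y, hy⟩
  have hexp : ∀ y (hy : y ∈ skewAdjoint 𝒜),
      (expUnitary (skewAdjoint.negISMul ⟨y, hy⟩) : 𝒜) = exp y := by
    intro y hy
    rw [expUnitary_coe, skewAdjoint.I_smul_neg_I ⟨y, hy⟩]
  rw [← hlog y₁ h₁ hn₁, ← hlog y₂ h₂ hn₂]
  congr 3
  exact Subtype.ext ((hexp y₁ h₁).trans (h.trans (hexp y₂ h₂).symm))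

theorem mul_eq_neg_mul_of_mul_exp_eq {s y : 𝒜} (hs : IsSelfAdjoint s) (hss : s * s = 1)
    (hy : y ∈ skewAdjoint 𝒜) (hn : ‖y‖ < Real.pi) (h : s * exp y = exp (-y) * s) :
    y * s = -(s * y) := by
  -- `NormedSpace.exp` lemmas are stated for Banach `ℚ`-algebras; this structure is not an instance
  let +nondep : NormedAlgebra ℚ 𝒜 := .restrictScalars ℚ ℂ 𝒜
  have hsu := hs.mem_unitary_of_mul_self_eq_one hss
  have hexp : exp (s * y * s) = exp (-y) := by
    have hconj : s * exp y = exp (s * y * s) * s :=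
      (show SemiconjBy s y (s * y * s) by rw [SemiconjBy, mul_assoc _ s, hss, mul_one]).exp_right
    rw [← mul_one (exp (s * y * s)), ← hss, ← mul_assoc, ← hconj, h, mul_assoc, hss, mul_one]
  have hskew : s * y * s ∈ skewAdjoint 𝒜 := by
    rw [skewAdjoint.mem_iff, star_mul, star_mul, hs.star_eq, skewAdjoint.mem_iff.mp hy]
    noncomm_ring
  have hnorm : ‖s * y * s‖ < Real.pi := by
    rwa [CStarRing.norm_mul_mem_unitary _ hsu, CStarRing.norm_mem_unitary_mul _ hsu]
  have hsys : s * y * s = -y :=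
    eq_of_exp_eq_of_mem_skewAdjoint hskew (neg_mem hy) hnorm (by rwa [norm_neg]) hexp
  calc y * s = s * (s * y * s) := by rw [← mul_assoc, ← mul_assoc, hss, one_mul]
    _ = -(s * y) := by rw [hsys, mul_neg]

theorem exists_mem_skewAdjoint_exp_add_self_eq_mul {s v a : 𝒜} (hs : IsSelfAdjoint s)
    (hss : s * s = 1) (hv : IsSelfAdjoint v) (hvv : v * v = 1) (has : a * s = -(s * a))
    (hav : a * v = -(v * a)) (h : ‖v - s‖ < 2) :
    ∃ z ∈ skewAdjoint 𝒜, ‖z‖ < Real.pi / 2 ∧ Commute z a ∧ z * s = -(s * z) ∧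
      exp (z + z) = v * s := by
  have hsu := hs.mem_unitary_of_mul_self_eq_one hss
  have hvs : ‖v * s - 1‖ < 2 := by
    rwa [← hss, ← sub_mul, CStarRing.norm_mul_mem_unitary _ hsu]
  obtain ⟨y, hy, hyn, hyexp, hycomm⟩ :=
    exists_mem_skewAdjoint_exp_eq (mul_mem (hv.mem_unitary_of_mul_self_eq_one hvv) hsu) hvs
  have hstar : star (v * s) = s * v := by rw [star_mul, hv.star_eq, hs.star_eq]
  have hyexp' : exp (-y) = s * v := by
    rw [← skewAdjoint.mem_iff.mp hy, ← star_exp, hyexp, hstar]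
  have hya : Commute y a := hycomm _ (commute_mul_of_anticommute hav has).symm
    (hstar ▸ (commute_mul_of_anticommute has hav).symm)
  have hys : y * s = -(s * y) :=
    mul_eq_neg_mul_of_mul_exp_eq hs hss hy hyn (by rw [hyexp, hyexp', mul_assoc])
  refine ⟨(2⁻¹ : ℂ) • y, ?_, ?_, hya.smul_left _, ?_, ?_⟩
  · simp [skewAdjoint.mem_iff, star_smul, skewAdjoint.mem_iff.mp hy]
  · rw [norm_smul]
    norm_num
    linarith
  · rw [smul_mul_assoc, mul_smul_comm, hys, smul_neg]
  · rw [← two_smul ℂ, smul_smul]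
    norm_num
    exact hyexp

end CStarAlgebra

theorem Commute.sqrt_right {𝒜 : Type*} [CStarAlgebra 𝒜] [PartialOrder 𝒜] [StarOrderedRing 𝒜]
    {a b : 𝒜} (h : Commute a b) : Commute a (CFC.sqrt b) :=
  (h.symm.cfcₙ_nnreal _).symm

theorem IsStarNormal.isRightRegular_of_injective {𝕜 E : Type*} [RCLike 𝕜]
    [NormedAddCommGroup E] [InnerProductSpace 𝕜 E] [CompleteSpace E] {T : E →L[𝕜] E}
    (hT : IsStarNormal T) (hinj : Function.Injective T) : IsRightRegular T := by
  have hdense : DenseRange T := by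
    change Dense (LinearMap.range (T : E →ₗ[𝕜] E) : Set E)
    rw [Submodule.dense_iff_topologicalClosure_eq_top, Submodule.topologicalClosure_eq_top_iff,
      ContinuousLinearMap.IsStarNormal.orthogonal_range hT]
    exact LinearMap.ker_eq_bot.mpr hinj
  intro C D hCD
  exact DFunLike.coe_injective
    (hdense.equalizer C.continuous D.continuous (congrArg DFunLike.coe hCD))

theorem GenericPosition.injective_add_sub_one {E : Type*} [NormedAddCommGroup E]
    [InnerProductSpace ℂ E] {P Q : E →L[ℂ] E} (hP : IsIdempotentElem P)
    (h : GenericPosition P Q) : Function.Injective ⇑(P + Q - 1) := by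
  rw [injective_iff_map_eq_zero]
  intro x hx
  have hsum : P x + Q x = x := by simpa [sub_eq_zero] using hx
  have hQx : Q x = 0 := by
    have hPPx : P (P x) = P x := DFunLike.congr_fun hP.eq x
    have hPQx : P (Q x) = 0 := by rw [eq_sub_of_add_eq' hsum, map_sub, hPPx, sub_self]
    have hmem : Q x ∈ LinearMap.ker (P : E →ₗ[ℂ] E) ⊓ LinearMap.range (Q : E →ₗ[ℂ] E) :=
      ⟨hPQx, x, rfl⟩
    rwa [h.2.2.1] at hmem
  have hmem : x ∈ LinearMap.range (P : E →ₗ[ℂ] E) ⊓ LinearMap.ker (Q : E →ₗ[ℂ] E) :=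
    ⟨⟨x, by simpa [hQx] using hsum⟩, hQx⟩
  rwa [h.2.1] at hmem

theorem GenericPosition.isRightRegular_add_sub_one {P Q : H →L[ℂ] H}
    (hP : IsOrthogonalProjection P) (hQ : IsOrthogonalProjection Q) (h : GenericPosition P Q) :
    IsRightRegular (P + Q - 1) :=
  ((hP.1.add hQ.1).sub (.one _)).isStarNormal.isRightRegular_of_injective
    (h.injective_add_sub_one hP.2)

def IsDavisSymmetry (P Q V : H →L[ℂ] H) : Prop :=
  IsSymmetry V ∧ Commute V (P + Q - 1) ∧ (V * (P + Q - 1)).IsPositive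

namespace IsDavisSymmetry

variable {P Q V : H →L[ℂ] H}

theorem mul_eq_sqrt (hP : IsIdempotentElem P) (hQ : IsIdempotentElem Q)
    (hV : IsDavisSymmetry P Q V) : V * (P + Q - 1) = CFC.sqrt (1 - (P - Q) * (P - Q)) := by
  rw [← hP.add_sub_one_mul_self hQ]
  refine (CFC.sqrt_unique ?_ ((nonneg_iff_isPositive _).mpr hV.2.2)).symm
  rw [mul_assoc, ← mul_assoc (P + Q - 1), ← hV.2.1.eq, mul_assoc, ← mul_assoc, hV.1.2, one_mul]

theorem add_sub_one_eq_mul_sqrt (hP : IsIdempotentElem P) (hQ : IsIdempotentElem Q)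
    (hV : IsDavisSymmetry P Q V) : P + Q - 1 = V * CFC.sqrt (1 - (P - Q) * (P - Q)) := by
  rw [← hV.mul_eq_sqrt hP hQ, ← mul_assoc, hV.1.2, one_mul]

theorem isRightRegular_sqrt (hP : IsOrthogonalProjection P) (hQ : IsOrthogonalProjection Q)
    (hgen : GenericPosition P Q) (hV : IsDavisSymmetry P Q V) :
    IsRightRegular (CFC.sqrt (1 - (P - Q) * (P - Q))) := by
  rw [← hV.mul_eq_sqrt hP.2 hQ.2]
  exact (isRightRegular_of_mul_eq_one hV.1.2).mul (hgen.isRightRegular_add_sub_one hP hQ)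

theorem sub_mul_eq_neg_mul (hP : IsOrthogonalProjection P) (hQ : IsOrthogonalProjection Q)
    (hgen : GenericPosition P Q) (hV : IsDavisSymmetry P Q V) :
    (P - Q) * V = -(V * (P - Q)) := by
  refine mul_eq_neg_mul_of_commute_mul (hgen.isRightRegular_add_sub_one hP hQ)
    (IsIdempotentElem.sub_mul_add_sub_one hP.2 hQ.2) ?_
  rw [hV.mul_eq_sqrt hP.2 hQ.2]
  exact ((Commute.one_right _).sub_right ((Commute.refl _).mul_right (Commute.refl _))).sqrt_right

end IsDavisSymmetry

theorem exp_conj_eq_iff_exp_add_self_eq {P₀ Q₀ P Q V₀ V Y : H →L[ℂ] H}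
    (hP₀ : IsOrthogonalProjection P₀) (hQ₀ : IsOrthogonalProjection Q₀)
    (hP : IsIdempotentElem P) (hQ : IsIdempotentElem Q) (hgen₀ : GenericPosition P₀ Q₀)
    (hdiff : P₀ - Q₀ = P - Q) (hV₀ : IsDavisSymmetry P₀ Q₀ V₀) (hV : IsDavisSymmetry P Q V)
    (hYA : Commute Y (P₀ - Q₀)) (hYV₀ : Y * V₀ = -(V₀ * Y)) :
    exp Y * P₀ * exp (-Y) = P ∧ exp Y * Q₀ * exp (-Y) = Q ↔ exp (Y + Y) = V * V₀ := by
  let +nondep : NormedAlgebra ℚ (H →L[ℂ] H) := .restrictScalars ℚ ℂ _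
  rw [conj_eq_and_conj_eq_iff ℂ (exp_mul_exp_neg Y) hYA.exp_left hdiff,
    hV₀.add_sub_one_eq_mul_sqrt hP₀.2 hQ₀.2, hV.add_sub_one_eq_mul_sqrt hP hQ, ← hdiff]
  exact exp_mul_mul_exp_neg_eq_iff hV₀.1.2 (hV₀.isRightRegular_sqrt hP₀ hQ₀ hgen₀)
    ((Commute.one_right Y).sub_right (hYA.mul_right hYA)).sqrt_right hYV₀

/-- If the Davis symmetries of two generic pairs with the same difference `A`
satisfy `‖V - V₀‖ < 2`, then there is a unique anti-Hermitian `Z` of norm `< π/2`, commuting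
with `A` and anticommuting with `V₀`, with `e^Z P₀ e^{-Z} = P` and `e^Z Q₀ e^{-Z} = Q`. -/
theorem exponential_unique_of_close (P₀ Q₀ P Q V₀ V : H →L[ℂ] H)
    (hP₀ : IsOrthogonalProjection P₀) (hQ₀ : IsOrthogonalProjection Q₀)
    (hP : IsOrthogonalProjection P) (hQ : IsOrthogonalProjection Q)
    (hgen₀ : GenericPosition P₀ Q₀) (hgen : GenericPosition P Q)
    (hdiff : P₀ - Q₀ = P - Q)
    (hV₀ : IsSymmetry V₀) (hV₀c : Commute V₀ (P₀ + Q₀ - 1))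
    (hV₀p : (V₀ * (P₀ + Q₀ - 1)).IsPositive)
    (hV : IsSymmetry V) (hVc : Commute V (P + Q - 1))
    (hVp : (V * (P + Q - 1)).IsPositive)
    (hclose : ‖V - V₀‖ < 2) :
    ∃! Z : H →L[ℂ] H, star Z = -Z ∧ ‖Z‖ < Real.pi / 2 ∧
      Z * (P₀ - Q₀) = (P₀ - Q₀) * Z ∧ Z * V₀ = -(V₀ * Z) ∧
      NormedSpace.exp Z * P₀ * NormedSpace.exp (-Z) = P ∧
      NormedSpace.exp Z * Q₀ * NormedSpace.exp (-Z) = Q := by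
  have hD₀ : IsDavisSymmetry P₀ Q₀ V₀ := ⟨hV₀, hV₀c, hV₀p⟩
  have hD : IsDavisSymmetry P Q V := ⟨hV, hVc, hVp⟩
  have hcrit := fun Y =>
    exp_conj_eq_iff_exp_add_self_eq (Y := Y) hP₀ hQ₀ hP.2 hQ.2 hgen₀ hdiff hD₀ hD
  obtain ⟨Z, hZ, hZn, hZA, hZV₀, hZexp⟩ := exists_mem_skewAdjoint_exp_add_self_eq_mul
    hV₀.1 hV₀.2 hV.1 hV.2 (hD₀.sub_mul_eq_neg_mul hP₀ hQ₀ hgen₀)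
    (hdiff ▸ hD.sub_mul_eq_neg_mul hP hQ hgen) hclose
  refine ⟨Z, ⟨skewAdjoint.mem_iff.mp hZ, hZn, hZA.eq, hZV₀, (hcrit Z hZA hZV₀).2 hZexp⟩, ?_⟩
  rintro Y ⟨hYs, hYn, hYA, hYV₀, hYP, hYQ⟩
  have hY : Y ∈ skewAdjoint _ := skewAdjoint.mem_iff.mpr hYs
  have hYY : Y + Y = Z + Z := eq_of_exp_eq_of_mem_skewAdjoint (add_mem hY hY) (add_mem hZ hZ)
    ((norm_add_le _ _).trans_lt (by linarith)) ((norm_add_le _ _).trans_lt (by linarith))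
    (((hcrit Y hYA hYV₀).1 ⟨hYP, hYQ⟩).trans hZexp.symm)
  exact smul_right_injective _ (two_ne_zero' ℂ) (by simpa only [two_smul] using hYY)
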